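/- Consider one step of the EISAV scheme: given M symmetric positive definite, S ∈ ℝ^{n×n}, h > 0, A = h S M, a fixed vector g ∈ ℝ^n, and (zⁿ, rⁿ), define zⁿ⁺¹ = e^A zⁿ + h φ₁(A) S f, rⁿ⁺¹ = rⁿ + ½ gᵀ (zⁿ⁺¹ − zⁿ), where f = ½(rⁿ⁺¹ + rⁿ) g. Then the modified energy H̃(z, r) = ½ zᵀ M z + r² − C satisfies: H̃(zⁿ⁺¹, rⁿ⁺¹) = H̃(zⁿ, rⁿ) if S is skew-symmetric, and H̃(zⁿ⁺¹, rⁿ⁺¹) ≤ H̃(zⁿ, rⁿ) if the symmetric part of S is negative semidefinite. -/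

import Mathlib

open Matrix

noncomputable def symPart {m : Type*} [Fintype m] (A : Matrix m m ℝ) : Matrix m m ℝ :=
  (1/2 : ℝ) • (A + Aᵀ)

def NegSemidef {m : Type*} [Fintype m] (A : Matrix m m ℝ) : Prop :=
  Aᵀ = A ∧ ∀ x : m → ℝ, x ⬝ᵥ A.mulVec x ≤ 0

noncomputable def phi1 {n : ℕ} (A : Matrix (Fin n) (Fin n) ℝ) : Matrix (Fin n) (Fin n) ℝ :=
  ∑' k : ℕ, (((k + 1).factorial : ℝ))⁻¹ • A ^ k

/-- the modified SAV energy `H̃(z,r) = ½ zᵀMz + r² − C` -/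
noncomputable def modEnergy {n : ℕ} (M : Matrix (Fin n) (Fin n) ℝ) (C : ℝ)
    (z : Fin n → ℝ) (r : ℝ) : ℝ :=
  (1/2 : ℝ) * (z ⬝ᵥ M.mulVec z) + r ^ 2 - C


/-! Put `u := M⁻¹ f` and `A := h S M`. Since `φ₁(A) A = e^A − I`, the step reads
`zⁿ⁺¹ + u = e^A (zⁿ + u)`, and the `r`-update gives `(rⁿ⁺¹)² − (rⁿ)² = fᵀ(zⁿ⁺¹ − zⁿ)`; together
they make `H̃(zⁿ⁺¹, rⁿ⁺¹) − H̃(zⁿ, rⁿ)` half the change of `wᵀ M w` from `w = zⁿ + u` to `e^A w`.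
Along `t ↦ e^{t S M} w` this quadratic form has derivative `2 (M wₜ)ᵀ sym(S) (M wₜ)`, which vanishes
for skew `S` and is nonpositive when `sym(S)` is negative semidefinite. -/

open NormedSpace

section Lyapunov

variable {m : Type*} [Fintype m]

theorem HasDerivAt.dotProduct {u v : ℝ → m → ℝ} {u' v' : m → ℝ} {t : ℝ}
    (hu : HasDerivAt u u' t) (hv : HasDerivAt v v' t) :
    HasDerivAt (fun s => u s ⬝ᵥ v s) (u' ⬝ᵥ v t + u t ⬝ᵥ v') t := by
  simp only [_root_.dotProduct, ← Finset.sum_add_distrib]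
  exact HasDerivAt.fun_sum fun i _ => (hasDerivAt_pi.1 hu i).mul (hasDerivAt_pi.1 hv i)

variable [DecidableEq m] (A M : Matrix m m ℝ)

theorem hasDerivAt_exp_smul_mulVec (x : m → ℝ) (t : ℝ) :
    HasDerivAt (fun s : ℝ => exp (s • A) *ᵥ x) (A *ᵥ (exp (t • A) *ᵥ x)) t := by
  open scoped Matrix.Norms.Operator in
  exact (((mulVecBilin ℝ ℝ).flip x).toContinuousLinearMap.hasFDerivAt.comp_hasDerivAt t
    (hasDerivAt_exp_smul_const' A t)).congr_deriv (mulVec_mulVec _ _ _).symm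

theorem hasDerivAt_dotProduct_mulVec_exp_smul (x : m → ℝ) (t : ℝ) :
    HasDerivAt (fun s : ℝ => (exp (s • A) *ᵥ x) ⬝ᵥ M *ᵥ (exp (s • A) *ᵥ x))
      ((exp (t • A) *ᵥ x) ⬝ᵥ (Aᵀ * M + M * A) *ᵥ (exp (t • A) *ᵥ x)) t := by
  have hv := hasDerivAt_exp_smul_mulVec A x t
  have hMv : HasDerivAt (fun s : ℝ => M *ᵥ (exp (s • A) *ᵥ x))
      (M *ᵥ (A *ᵥ (exp (t • A) *ᵥ x))) t :=
    M.mulVecLin.toContinuousLinearMap.hasFDerivAt.comp_hasDerivAt t hv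
  convert hv.dotProduct hMv using 1
  rw [add_mulVec, dotProduct_add, ← mulVec_mulVec, dotProduct_mulVec _ Aᵀ, vecMul_transpose,
    ← mulVec_mulVec]

theorem dotProduct_mulVec_exp_smul_le (hAM : ∀ y, y ⬝ᵥ (Aᵀ * M + M * A) *ᵥ y ≤ 0)
    {t : ℝ} (ht : 0 ≤ t) (x : m → ℝ) :
    (exp (t • A) *ᵥ x) ⬝ᵥ M *ᵥ (exp (t • A) *ᵥ x) ≤ x ⬝ᵥ M *ᵥ x := by
  have hderiv := hasDerivAt_dotProduct_mulVec_exp_smul A M x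
  have hanti := antitone_of_deriv_nonpos (fun s => (hderiv s).differentiableAt)
    fun s => (hderiv s).deriv ▸ hAM _
  simpa using hanti ht

theorem dotProduct_mulVec_exp_smul_eq (hAM : Aᵀ * M + M * A = 0) (t : ℝ) (x : m → ℝ) :
    (exp (t • A) *ᵥ x) ⬝ᵥ M *ᵥ (exp (t • A) *ᵥ x) = x ⬝ᵥ M *ᵥ x := by
  have hderiv := hasDerivAt_dotProduct_mulVec_exp_smul A M x
  have hconst := is_const_of_deriv_eq_zero (fun s => (hderiv s).differentiableAt)
    fun s => by rw [(hderiv s).deriv, hAM, zero_mulVec, dotProduct_zero]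
  simpa using hconst t 0

end Lyapunov

section Phi1

open scoped Matrix.Norms.Operator

variable {n : ℕ} (A : Matrix (Fin n) (Fin n) ℝ)

theorem summable_phi1 : Summable fun k : ℕ => (((k + 1).factorial : ℝ))⁻¹ • A ^ k := by
  refine .of_norm_bounded (norm_expSeries_summable' (𝕂 := ℝ) A) fun k => ?_
  rw [norm_smul, norm_smul, norm_inv, norm_inv, Real.norm_natCast, Real.norm_natCast]
  gcongr
  exact k.le_succ

theorem phi1_mul_self : phi1 A * A = exp A - 1 := by
  rw [phi1, ← (summable_phi1 A).tsum_mul_right, eq_sub_iff_add_eq, exp_eq_tsum ℝ]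
  beta_reduce
  have hexp : Summable fun k : ℕ => ((k.factorial : ℝ))⁻¹ • A ^ k := expSeries_summable' A
  rw [hexp.tsum_eq_zero_add]
  simp [← pow_succ, add_comm]

end Phi1

theorem smul_phi1_mulVec_eq_exp_mulVec_sub {n : ℕ} (S M : Matrix (Fin n) (Fin n) ℝ) (h : ℝ)
    (u : Fin n → ℝ) :
    h • phi1 (h • (S * M)) *ᵥ (S *ᵥ (M *ᵥ u)) = exp (h • (S * M)) *ᵥ u - u := by
  rw [mulVec_mulVec, mulVec_mulVec, ← smul_mulVec, Matrix.mul_assoc, ← Matrix.mul_smul,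
    phi1_mul_self, sub_mulVec, one_mulVec]

section Energy

variable {m : Type*} [Fintype m] {M : Matrix m m ℝ}

theorem transpose_mul_add_mul_eq_smul_symPart (hM : Mᵀ = M) (S : Matrix m m ℝ) :
    (S * M)ᵀ * M + M * (S * M) = (2 : ℝ) • (M * symPart S * M) := by
  simp only [symPart, transpose_mul, hM, Matrix.mul_smul, Matrix.smul_mul, smul_smul,
    Matrix.mul_add, Matrix.add_mul, Matrix.mul_assoc]
  norm_num
  abel

theorem symPart_eq_zero_of_transpose_eq_neg {S : Matrix m m ℝ} (hS : Sᵀ = -S) :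
    symPart S = 0 := by
  simp [symPart, hS]

theorem dotProduct_mulVec_mul_mul (hM : Mᵀ = M) (P : Matrix m m ℝ) (y : m → ℝ) :
    y ⬝ᵥ (M * P * M) *ᵥ y = (M *ᵥ y) ⬝ᵥ P *ᵥ (M *ᵥ y) := by
  rw [← mulVec_mulVec, ← mulVec_mulVec, dotProduct_mulVec, ← hM, vecMul_transpose, hM]

theorem dotProduct_add_mulVec_add (hM : Mᵀ = M) (w u : m → ℝ) :
    (w + u) ⬝ᵥ M *ᵥ (w + u) = w ⬝ᵥ M *ᵥ w + 2 * ((M *ᵥ u) ⬝ᵥ w) + u ⬝ᵥ M *ᵥ u := by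
  have hsymm : u ⬝ᵥ M *ᵥ w = (M *ᵥ u) ⬝ᵥ w := by
    rw [dotProduct_mulVec, ← hM, vecMul_transpose, hM]
  rw [mulVec_add, dotProduct_add, add_dotProduct, add_dotProduct, hsymm,
    dotProduct_comm w (M *ᵥ u)]
  ring

theorem transpose_mul_add_mul_eq_zero_of_transpose_eq_neg (hM : Mᵀ = M) {S : Matrix m m ℝ}
    (hS : Sᵀ = -S) : (S * M)ᵀ * M + M * (S * M) = 0 := by
  rw [transpose_mul_add_mul_eq_smul_symPart hM, symPart_eq_zero_of_transpose_eq_neg hS,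
    Matrix.mul_zero, Matrix.zero_mul, smul_zero]

theorem dotProduct_transpose_mul_add_mul_nonpos (hM : Mᵀ = M) {S : Matrix m m ℝ}
    (hS : NegSemidef (symPart S)) (y : m → ℝ) :
    y ⬝ᵥ ((S * M)ᵀ * M + M * (S * M)) *ᵥ y ≤ 0 := by
  rw [transpose_mul_add_mul_eq_smul_symPart hM, smul_mulVec, dotProduct_smul, smul_eq_mul,
    dotProduct_mulVec_mul_mul hM]
  linarith [hS.2 (M *ᵥ y)]

theorem sq_sub_sq_eq_dotProduct_sub {f g z z' : m → ℝ} {r r' : ℝ}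
    (hf : f = ((r' + r) / 2) • g) (hr : r' = r + 1 / 2 * (g ⬝ᵥ (z' - z))) :
    r' ^ 2 - r ^ 2 = f ⬝ᵥ (z' - z) := by
  rw [hf, smul_dotProduct, smul_eq_mul]
  linear_combination (r' + r) * hr

end Energy

theorem modEnergy_sub_modEnergy {n : ℕ} {M : Matrix (Fin n) (Fin n) ℝ} (hM : Mᵀ = M) (C : ℝ)
    {z z' u : Fin n → ℝ} {r r' : ℝ} (hr : r' ^ 2 - r ^ 2 = (M *ᵥ u) ⬝ᵥ (z' - z)) :
    modEnergy M C z' r' - modEnergy M C z r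
      = 1 / 2 * ((z' + u) ⬝ᵥ M *ᵥ (z' + u) - (z + u) ⬝ᵥ M *ᵥ (z + u)) := by
  rw [modEnergy, modEnergy, dotProduct_add_mulVec_add hM, dotProduct_add_mulVec_add hM]
  rw [dotProduct_sub] at hr
  linarith

/-- one step of EISAV,
`zⁿ⁺¹ = e^A zⁿ + h φ₁(A) S f`, `rⁿ⁺¹ = rⁿ + ½ gᵀ(zⁿ⁺¹ − zⁿ)`, `f = ½(rⁿ⁺¹+rⁿ)g`,
conserves the modified energy `H̃` when `S` is skew-symmetric, and dissipates it
when the symmetric part of `S` is negative semidefinite. -/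
theorem stmt10 {n : ℕ} (M S : Matrix (Fin n) (Fin n) ℝ)
    (hMsymm : Mᵀ = M) (hMpd : M.PosDef)
    (h : ℝ) (hh : 0 < h) (g : Fin n → ℝ) (C : ℝ)
    (zn zn1 : Fin n → ℝ) (rn rn1 : ℝ) (f : Fin n → ℝ)
    (hf : f = ((rn1 + rn) / 2) • g)
    (hzstep : zn1 = (NormedSpace.exp (h • (S * M))).mulVec zn
      + h • (phi1 (h • (S * M))).mulVec (S.mulVec f))
    (hrstep : rn1 = rn + (1/2 : ℝ) * (g ⬝ᵥ (zn1 - zn))) :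
    (Sᵀ = -S → modEnergy M C zn1 rn1 = modEnergy M C zn rn)
    ∧ (NegSemidef (symPart S) → modEnergy M C zn1 rn1 ≤ modEnergy M C zn rn) := by
  obtain ⟨u, rfl⟩ := mulVec_surjective_iff_isUnit.2 hMpd.isUnit f
  have hflow : zn1 + u = exp (h • (S * M)) *ᵥ (zn + u) := by
    rw [hzstep, smul_phi1_mulVec_eq_exp_mulVec_sub, mulVec_add]
    abel
  have henergy := modEnergy_sub_modEnergy hMsymm C (sq_sub_sq_eq_dotProduct_sub hf hrstep)
  rw [hflow] at henergy
  refine ⟨fun hS => ?_, fun hS => ?_⟩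
  · have := dotProduct_mulVec_exp_smul_eq (S * M) M
      (transpose_mul_add_mul_eq_zero_of_transpose_eq_neg hMsymm hS) h (zn + u)
    linarith
  · have := dotProduct_mulVec_exp_smul_le (S * M) M
      (dotProduct_transpose_mul_add_mul_nonpos hMsymm hS) hh.le (zn + u)
    linarith
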